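/- Let G be a bounded Vilenkin group with sup_k m_k < ∞. There is a constant c (depending only on sup_k m_k) such that for every n ∈ ℕ_+, ‖D_n‖_{L¹(G)} ≤ c · (ρ(n) + 1), where ρ(n) = |n| − ⟨n⟩. -/

import Mathlib

open MeasureTheory Complex Real

def Mseq (m : ℕ → ℕ) : ℕ → ℕ
  | 0 => 1
  | k + 1 => m k * Mseq m k

def digit (m : ℕ → ℕ) (n j : ℕ) : ℕ := n / Mseq m j % m j

noncomputable def hi (m : ℕ → ℕ) (n : ℕ) : ℕ := sSup {j | digit m n j ≠ 0}

noncomputable def lo (m : ℕ → ℕ) (n : ℕ) : ℕ := sInf {j | digit m n j ≠ 0}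

noncomputable def rho (m : ℕ → ℕ) (n : ℕ) : ℕ := hi m n - lo m n

abbrev Gm (m : ℕ → ℕ) := ∀ k, ZMod (m k)

instance (n : ℕ) : MeasurableSpace (ZMod n) := ⊤

noncomputable def rad (m : ℕ → ℕ) (j : ℕ) (x : Gm m) : ℂ :=
  Complex.exp (2 * Real.pi * Complex.I * ((x j).val : ℂ) / (m j : ℂ))

noncomputable def vil (m : ℕ → ℕ) (n : ℕ) (x : Gm m) : ℂ :=
  ∏ᶠ j, rad m j x ^ digit m n j

noncomputable def Dker (m : ℕ → ℕ) (n : ℕ) (x : Gm m) : ℂ :=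
  ∑ k ∈ Finset.range n, vil m k x

/-- The defining property of the normalized Haar measure on the Vilenkin group:
every cylinder set `I_n(x)` has measure `1 / M_n`. -/
def IsVilenkinHaar (m : ℕ → ℕ) (μ : Measure (Gm m)) : Prop :=
  ∀ (n : ℕ) (x : Gm m), μ {y : Gm m | ∀ j < n, y j = x j} = (Mseq m n : ENNReal)⁻¹

noncomputable def vilCoeff (m : ℕ → ℕ) (μ : Measure (Gm m)) (f : Gm m → ℂ) (j : ℕ) : ℂ :=
  ∫ t, f t * (starRingEnd ℂ) (vil m j t) ∂μ

noncomputable def Svil (m : ℕ → ℕ) (μ : Measure (Gm m)) (f : Gm m → ℂ) (n : ℕ) (x : Gm m) : ℂ :=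
  ∑ j ∈ Finset.range n, vilCoeff m μ f j * vil m j x


/-!
Splitting `n = d · M_L + r` with `d` the top digit and `r < M_L` gives
`D_n = (∑_{u<d} ψ_{u M_L}) D_{M_L} + ψ_{d M_L} D_r`, and since `|ψ_k| = 1` this yields, inductively,
`|D_n| ≤ ∑_j n_j |D_{M_j}|` pointwise. The kernel `D_{M_j}` is `M_j` times the indicator of the
cylinder `x_0 = ⋯ = x_{j-1} = 0` of measure `1 / M_j`, so `‖D_{M_j}‖₁ = 1` and `‖D_n‖₁ ≤ ∑_j n_j`.
The nonzero digits `n_j` lie between `⟨n⟩` and `|n|` and are smaller than `m_*`, so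
`∑_j n_j ≤ m_* (ρ(n) + 1)`.
-/

open Finset

section

variable {m : ℕ → ℕ} {μ : Measure (Gm m)}

theorem sum_range_le_mul_sSup_sub_sInf {f : ℕ → ℕ} {B : ℕ} (hB : ∀ j, f j ≤ B)
    (hf : BddAbove {j | f j ≠ 0}) (L : ℕ) :
    ∑ j ∈ range L, f j ≤ B * (sSup {j | f j ≠ 0} - sInf {j | f j ≠ 0} + 1) := by
  set S := {j | f j ≠ 0}
  have hsub : (range L).filter (f · ≠ 0) ⊆ Icc (sInf S) (sSup S) := fun j hj =>
    mem_Icc.mpr ⟨Nat.sInf_le (mem_filter.mp hj).2, le_csSup hf (mem_filter.mp hj).2⟩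
  calc ∑ j ∈ range L, f j = ∑ j ∈ (range L).filter (f · ≠ 0), f j := (sum_filter_ne_zero _).symm
    _ ≤ ∑ j ∈ Icc (sInf S) (sSup S), f j := sum_le_sum_of_subset hsub
    _ ≤ (Icc (sInf S) (sSup S)).card • B := sum_le_card_nsmul _ _ _ fun j _ => hB j
    _ ≤ B * (sSup S - sInf S + 1) := by
        rw [Nat.card_Icc, smul_eq_mul, mul_comm]
        gcongr
        omega

theorem Mseq_eq_prod (n : ℕ) : Mseq m n = ∏ k ∈ range n, m k := by
  induction n with
  | zero => rfl
  | succ n ih => rw [prod_range_succ, ← ih, mul_comm]; rfl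

theorem Mseq_succ (n : ℕ) : Mseq m (n + 1) = m n * Mseq m n := rfl

theorem Mseq_pos (hm : ∀ k, 0 < m k) (n : ℕ) : 0 < Mseq m n := by
  rw [Mseq_eq_prod]
  exact prod_pos fun k _ => hm k

theorem Mseq_dvd_Mseq {i j : ℕ} (h : i ≤ j) : Mseq m i ∣ Mseq m j := by
  rw [Mseq_eq_prod, Mseq_eq_prod]
  exact prod_dvd_prod_of_subset _ _ _ (range_subset_range.mpr h)

theorem Mseq_le_Mseq (hm : ∀ k, 0 < m k) {i j : ℕ} (h : i ≤ j) : Mseq m i ≤ Mseq m j :=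
  Nat.le_of_dvd (Mseq_pos hm j) (Mseq_dvd_Mseq h)

theorem lt_Mseq_self (hm : ∀ k, 2 ≤ m k) (n : ℕ) : n < Mseq m n := by
  calc n < 2 ^ n := Nat.lt_two_pow_self
    _ = 2 ^ (range n).card := by rw [card_range]
    _ ≤ Mseq m n := by rw [Mseq_eq_prod]; exact pow_card_le_prod _ _ _ fun k _ => hm k

theorem digit_eq_mod_div (n j : ℕ) : digit m n j = n % Mseq m (j + 1) / Mseq m j := by
  rw [Mseq_succ, mul_comm, Nat.mod_mul_right_div_self]
  rfl

theorem digit_lt (hm : ∀ k, 0 < m k) (n j : ℕ) : digit m n j < m j :=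
  Nat.mod_lt _ (hm j)

theorem digit_eq_zero_of_lt {n j : ℕ} (h : n < Mseq m j) : digit m n j = 0 := by
  rw [digit, Nat.div_eq_of_lt h, Nat.zero_mod]

theorem digit_eq_zero_of_dvd {a i : ℕ} (h : Mseq m (i + 1) ∣ a) : digit m a i = 0 := by
  rw [digit_eq_mod_div, Nat.mod_eq_zero_of_dvd h, Nat.zero_div]

theorem digit_of_lt_Mseq_succ {n j : ℕ} (h : n < Mseq m (j + 1)) : digit m n j = n / Mseq m j := by
  rw [digit_eq_mod_div, Nat.mod_eq_of_lt h]

theorem digit_mod_Mseq {j L : ℕ} (h : j < L) (n : ℕ) :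
    digit m (n % Mseq m L) j = digit m n j := by
  rw [digit_eq_mod_div, digit_eq_mod_div, Nat.mod_mod_of_dvd _ (Mseq_dvd_Mseq h)]

theorem digit_add (hm : ∀ k, 0 < m k) {a b j : ℕ} (ha : Mseq m j ∣ a) (hb : b < Mseq m j)
    (i : ℕ) : digit m (a + b) i = digit m a i + digit m b i := by
  rcases lt_or_ge i j with hij | hji
  · have hi : Mseq m (i + 1) ∣ a := (Mseq_dvd_Mseq hij).trans ha
    rw [digit_eq_zero_of_dvd hi, zero_add, digit_eq_mod_div, digit_eq_mod_div,
      Nat.add_mod, Nat.mod_eq_zero_of_dvd hi, zero_add, Nat.mod_mod]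
  · obtain ⟨w, hw⟩ := Mseq_dvd_Mseq (m := m) hji
    have hb' : b / Mseq m j = 0 := Nat.div_eq_of_lt hb
    rw [digit_eq_zero_of_lt (hb.trans_le (Mseq_le_Mseq hm hji)), add_zero, digit, digit, hw,
      ← Nat.div_div_eq_div_mul, ← Nat.div_div_eq_div_mul, Nat.add_div_of_dvd_right ha, hb',
      add_zero]

theorem rad_eq_pow (j : ℕ) (x : Gm m) :
    rad m j x = Complex.exp (2 * π * Complex.I / m j) ^ (x j).val := by
  rw [rad, ← Complex.exp_nat_mul]
  ring_nf

theorem rad_pow_self {j : ℕ} (hj : m j ≠ 0) (x : Gm m) : rad m j x ^ m j = 1 := by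
  rw [rad_eq_pow, pow_right_comm, (Complex.isPrimitiveRoot_exp _ hj).pow_eq_one, one_pow]

theorem rad_eq_one_iff {j : ℕ} (hj : m j ≠ 0) (x : Gm m) : rad m j x = 1 ↔ x j = 0 := by
  have : NeZero (m j) := ⟨hj⟩
  rw [rad_eq_pow, (Complex.isPrimitiveRoot_exp _ hj).pow_eq_one_iff_dvd,
    ← ZMod.natCast_eq_zero_iff, ZMod.natCast_zmod_val]

theorem norm_rad {j : ℕ} (hj : m j ≠ 0) (x : Gm m) : ‖rad m j x‖ = 1 := by
  rw [rad_eq_pow, norm_pow, (Complex.isPrimitiveRoot_exp _ hj).norm'_eq_one hj, one_pow]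

theorem sum_range_rad_pow {j : ℕ} (hj : m j ≠ 0) (x : Gm m) :
    ∑ u ∈ range (m j), rad m j x ^ u = if x j = 0 then (m j : ℂ) else 0 := by
  split_ifs with h
  · simp [(rad_eq_one_iff hj x).mpr h]
  · rw [geom_sum_eq (mt (rad_eq_one_iff hj x).mp h), rad_pow_self hj, sub_self, zero_div]

theorem vil_eq_prod (hm : ∀ k, 0 < m k) {n L : ℕ} (hn : n < Mseq m L) (x : Gm m) :
    vil m n x = ∏ j ∈ range L, rad m j x ^ digit m n j := by
  refine finprod_eq_prod_of_mulSupport_subset _ fun j hj => ?_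
  by_contra hjL
  have hLj : L ≤ j := by simpa using hjL
  simp [digit_eq_zero_of_lt (hn.trans_le (Mseq_le_Mseq hm hLj))] at hj

theorem norm_vil (hm : ∀ k, 2 ≤ m k) (n : ℕ) (x : Gm m) : ‖vil m n x‖ = 1 := by
  have hm₀ : ∀ k, 0 < m k := fun k => zero_lt_two.trans_le (hm k)
  rw [vil_eq_prod hm₀ (lt_Mseq_self hm n), norm_prod]
  exact prod_eq_one fun j _ => by rw [norm_pow, norm_rad (hm₀ j).ne', one_pow]

theorem vil_add (hm : ∀ k, 2 ≤ m k) {a b j : ℕ} (ha : Mseq m j ∣ a) (hb : b < Mseq m j)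
    (x : Gm m) : vil m (a + b) x = vil m a x * vil m b x := by
  have hm₀ : ∀ k, 0 < m k := fun k => zero_lt_two.trans_le (hm k)
  have hab := lt_Mseq_self hm (a + b)
  rw [vil_eq_prod hm₀ hab, vil_eq_prod hm₀ ((Nat.le_add_right a b).trans_lt hab),
    vil_eq_prod hm₀ ((Nat.le_add_left b a).trans_lt hab), ← prod_mul_distrib]
  exact prod_congr rfl fun i _ => by rw [digit_add hm₀ ha hb, pow_add]

theorem vil_mul_Mseq (hm : ∀ k, 0 < m k) {u j : ℕ} (hu : u < m j) (x : Gm m) :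
    vil m (u * Mseq m j) x = rad m j x ^ u := by
  have hlt : u * Mseq m j < Mseq m (j + 1) :=
    Nat.mul_lt_mul_of_pos_right hu (Mseq_pos hm j)
  rw [vil, finprod_eq_single _ j fun i hij => ?_,
    digit_of_lt_Mseq_succ hlt, Nat.mul_div_cancel _ (Mseq_pos hm j)]
  rcases hij.lt_or_gt with hij | hji
  · rw [digit_eq_zero_of_dvd ((Mseq_dvd_Mseq hij).mul_left u), pow_zero]
  · rw [digit_eq_zero_of_lt (hlt.trans_le (Mseq_le_Mseq hm hji)), pow_zero]

theorem Dker_add_of_dvd (hm : ∀ k, 2 ≤ m k) {a c j : ℕ} (ha : Mseq m j ∣ a)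
    (hc : c ≤ Mseq m j) (x : Gm m) :
    Dker m (a + c) x = Dker m a x + vil m a x * Dker m c x := by
  rw [Dker, Dker, Dker, sum_range_add, mul_sum]
  exact congrArg _ (sum_congr rfl fun k hk => vil_add hm ha ((mem_range.mp hk).trans_le hc) x)

theorem Dker_mul_Mseq (hm : ∀ k, 2 ≤ m k) (d j : ℕ) (x : Gm m) :
    Dker m (d * Mseq m j) x
      = (∑ u ∈ range d, vil m (u * Mseq m j) x) * Dker m (Mseq m j) x := by
  induction d with
  | zero => simp [Dker]
  | succ d ih =>
    rw [Nat.succ_mul, Dker_add_of_dvd hm (dvd_mul_left _ _) le_rfl, ih, sum_range_succ, add_mul]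

theorem Dker_Mseq (hm : ∀ k, 2 ≤ m k) (j : ℕ) (x : Gm m) :
    Dker m (Mseq m j) x = if ∀ i < j, x i = 0 then (Mseq m j : ℂ) else 0 := by
  have hm₀ : ∀ k, 0 < m k := fun k => zero_lt_two.trans_le (hm k)
  induction j with
  | zero => simp [Mseq, Dker, vil, digit]
  | succ j ih =>
    rw [Mseq_succ, Dker_mul_Mseq hm,
      sum_congr rfl fun u hu => vil_mul_Mseq hm₀ (mem_range.mp hu) x,
      sum_range_rad_pow (hm₀ j).ne', ih]
    simp only [Nat.forall_lt_succ_right]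
    split_ifs <;> simp_all

theorem norm_Dker_le_sum_digit_mul (hm : ∀ k, 2 ≤ m k) {L n : ℕ} (hn : n < Mseq m L)
    (x : Gm m) :
    ‖Dker m n x‖ ≤ ∑ j ∈ range L, (digit m n j : ℝ) * ‖Dker m (Mseq m j) x‖ := by
  induction L generalizing n with
  | zero => simp [Nat.lt_one_iff.mp hn, Dker]
  | succ L ih =>
    set M := Mseq m L
    set d := digit m n L
    have hM : 0 < M := Mseq_pos (fun k => zero_lt_two.trans_le (hm k)) L
    have hsplit : n = d * M + n % M := by
      rw [show d = n / M from digit_of_lt_Mseq_succ hn, Nat.div_add_mod']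
    have hdecomp : Dker m n x
        = (∑ u ∈ range d, vil m (u * M) x) * Dker m M x + vil m (d * M) x * Dker m (n % M) x := by
      conv_lhs => rw [hsplit]
      rw [Dker_add_of_dvd hm (dvd_mul_left _ _) (Nat.mod_lt _ hM).le, Dker_mul_Mseq hm]
    have hdigits : ∀ j ∈ range L, digit m (n % M) j = digit m n j :=
      fun j hj => digit_mod_Mseq (mem_range.mp hj) n
    calc ‖Dker m n x‖ ≤ d * ‖Dker m M x‖ + ‖Dker m (n % M) x‖ := by
          rw [hdecomp]
          refine (norm_add_le _ _).trans (add_le_add ?_ ?_)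
          · rw [norm_mul]
            gcongr
            exact (norm_sum_le _ _).trans (by simp [norm_vil hm])
          · rw [norm_mul, norm_vil hm, one_mul]
      _ ≤ d * ‖Dker m M x‖ + ∑ j ∈ range L, (digit m n j : ℝ) * ‖Dker m (Mseq m j) x‖ := by
          grw [ih (Nat.mod_lt _ hM), sum_congr rfl fun j hj => by rw [hdigits j hj]]
      _ = ∑ j ∈ range (L + 1), (digit m n j : ℝ) * ‖Dker m (Mseq m j) x‖ := by
          rw [sum_range_succ, add_comm]

theorem norm_Dker_Mseq (hm : ∀ k, 2 ≤ m k) (j : ℕ) :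
    (fun x => ‖Dker m (Mseq m j) x‖)
      = ((Set.Iio j).pi fun i => ({0} : Set (ZMod (m i)))).indicator fun _ => (Mseq m j : ℝ) := by
  ext x
  by_cases h : ∀ i < j, x i = 0
  · rw [Dker_Mseq hm, if_pos h, Set.indicator_of_mem (by exact h), Complex.norm_natCast]
  · rw [Dker_Mseq hm, if_neg h, Set.indicator_of_notMem (by exact h), norm_zero]

theorem measurableSet_pi_Iio_zero (j : ℕ) :
    MeasurableSet ((Set.Iio j).pi fun i => ({0} : Set (ZMod (m i)))) :=
  .pi (Set.to_countable _) fun _ _ => MeasurableSpace.measurableSet_top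

theorem IsVilenkinHaar.measure_pi_Iio_zero (hμ : IsVilenkinHaar m μ) (j : ℕ) :
    μ ((Set.Iio j).pi fun i => ({0} : Set (ZMod (m i)))) = (Mseq m j : ENNReal)⁻¹ :=
  hμ j 0

theorem integrable_norm_Dker_Mseq (hm : ∀ k, 2 ≤ m k) (hμ : IsVilenkinHaar m μ) (j : ℕ) :
    Integrable (fun x => ‖Dker m (Mseq m j) x‖) μ := by
  rw [norm_Dker_Mseq hm, integrable_indicator_iff (measurableSet_pi_Iio_zero j)]
  refine integrableOn_const ((hμ.measure_pi_Iio_zero j).trans_ne (ENNReal.inv_ne_top.mpr ?_))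
  exact_mod_cast (Mseq_pos (fun k => zero_lt_two.trans_le (hm k)) j).ne'

theorem integral_norm_Dker_Mseq (hm : ∀ k, 2 ≤ m k) (hμ : IsVilenkinHaar m μ) (j : ℕ) :
    ∫ x, ‖Dker m (Mseq m j) x‖ ∂μ = 1 := by
  have hM : (Mseq m j : ℝ) ≠ 0 :=
    Nat.cast_ne_zero.mpr (Mseq_pos (fun k => zero_lt_two.trans_le (hm k)) j).ne'
  rw [norm_Dker_Mseq hm, integral_indicator_const _ (measurableSet_pi_Iio_zero j),
    measureReal_def, hμ.measure_pi_Iio_zero, smul_eq_mul, ENNReal.toReal_inv,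
    ENNReal.toReal_natCast, inv_mul_cancel₀ hM]

theorem integral_norm_Dker_le_sum_digit (hm : ∀ k, 2 ≤ m k) (hμ : IsVilenkinHaar m μ)
    {L n : ℕ} (hn : n < Mseq m L) :
    ∫ x, ‖Dker m n x‖ ∂μ ≤ ∑ j ∈ range L, (digit m n j : ℝ) := by
  have hint : ∀ j ∈ range L, Integrable (fun x => (digit m n j : ℝ) * ‖Dker m (Mseq m j) x‖) μ :=
    fun j _ => (integrable_norm_Dker_Mseq hm hμ j).const_mul _
  calc ∫ x, ‖Dker m n x‖ ∂μ
      ≤ ∫ x, ∑ j ∈ range L, (digit m n j : ℝ) * ‖Dker m (Mseq m j) x‖ ∂μ :=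
        integral_mono_of_nonneg (.of_forall fun _ => norm_nonneg _) (integrable_finsetSum _ hint)
          (.of_forall fun x => norm_Dker_le_sum_digit_mul hm hn x)
    _ = ∑ j ∈ range L, (digit m n j : ℝ) := by
        rw [integral_finsetSum _ hint]
        simp only [integral_const_mul, integral_norm_Dker_Mseq hm hμ, mul_one]

theorem sum_range_digit_le (hm : ∀ k, 2 ≤ m k) {B : ℕ} (hB : ∀ k, m k ≤ B) (n L : ℕ) :
    ∑ j ∈ range L, digit m n j ≤ B * (rho m n + 1) := by
  have hm₀ : ∀ k, 0 < m k := fun k => zero_lt_two.trans_le (hm k)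
  refine sum_range_le_mul_sSup_sub_sInf (fun j => ((digit_lt hm₀ n j).trans_le (hB j)).le)
    ⟨n, fun j hj => not_lt.mp fun hnj => hj ?_⟩ L
  exact digit_eq_zero_of_lt ((lt_Mseq_self hm n).trans_le (Mseq_le_Mseq hm₀ hnj.le))

end

/-- On a bounded Vilenkin group there is a constant `c`, depending only on the
bound `m_*` of the generating sequence, such that `‖D_n‖₁ ≤ c (ρ(n) + 1)`. -/
theorem stmt_12 (mstar : ℕ) :
    ∃ c : ℝ, 0 < c ∧
      ∀ (m : ℕ → ℕ), (∀ k, 2 ≤ m k) → (∀ k, m k ≤ mstar) →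
        ∀ (μ : Measure (Gm m)), IsProbabilityMeasure μ → IsVilenkinHaar m μ →
          ∀ n : ℕ, 1 ≤ n →
            ∫ x, ‖Dker m n x‖ ∂μ ≤ c * (rho m n + 1) := by
  refine ⟨mstar + 1, by positivity, fun m hm hms μ _ hμ n _ => ?_⟩
  calc ∫ x, ‖Dker m n x‖ ∂μ ≤ ∑ j ∈ range n, (digit m n j : ℝ) :=
        integral_norm_Dker_le_sum_digit hm hμ (lt_Mseq_self hm n)
    _ ≤ mstar * (rho m n + 1) := by exact_mod_cast sum_range_digit_le hm hms n n
    _ ≤ (mstar + 1) * (rho m n + 1) := by gcongr; linarith
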